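/- arXiv:2305.15107 — 8 statements merged into one kernel-verified Lean document; each statement's English description precedes it below -/
import Mathlib

section
/- Let n, r, s be positive integers, σ = r + s, and γ = gcd(r, s). Then there exists an invertible diagonal matrix D ∈ GL_n(ℂ) such that D·T_n(g_{r,s})·D^{−1} = e^{2πiγ/σ}·T_n(g_{r,s}). Consequently, the multiset of eigenvalues of T_n(g_{r,s}) is invariant under multiplication by e^{2πiγ/σ} = e^{2πi/ω}, where ω = σ/γ. -/
open Matrix Polynomial Real

/-- The `n × n` Toeplitz matrix generated by the symbol
`g_{r,s}(θ) = e^{irθ} + e^{-isθ}`. -/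
noncomputable def Tg (n r s : ℕ) : Matrix (Fin n) (Fin n) ℂ :=
  Matrix.of fun i j =>
    if (i : ℤ) - (j : ℤ) = (r : ℤ) ∨ (i : ℤ) - (j : ℤ) = -(s : ℤ) then 1 else 0

/-!
If `w` is an `(r + s)`-th root of unity with `w ^ r = ζ := e^{2πi gcd(r,s)/(r+s)}`, then also
`w ^ (-s) = ζ`, so conjugating `T_n(g_{r,s})` by `diag(1, w, …, w^{n-1})` multiplies both nonzero
diagonals by `ζ`. Similar matrices have equal characteristic polynomials, and the roots
of the characteristic polynomial of `ζ • T` are those of `T` multiplied by `ζ`.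
-/

/-- Bézout: `r * a ≡ gcd r s (mod r + s)`, so `w = x ^ a` works. -/
theorem exists_pow_add_eq_one_and_pow_eq_pow_gcd {G : Type*} [Group G] {x : G} {r s : ℕ}
    (hx : x ^ (r + s) = 1) : ∃ w : G, w ^ (r + s) = 1 ∧ w ^ r = x ^ Nat.gcd r s := by
  have hgcd : Nat.gcd r (r + s) = Nat.gcd r s := by
    rw [add_comm, Nat.gcd_add_self_right]
  have hσ : x ^ ((r + s : ℕ) : ℤ) = 1 := by rw [zpow_natCast, hx]
  refine ⟨x ^ Nat.gcdA r (r + s), ?_, ?_⟩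
  · rw [← zpow_natCast, ← _root_.zpow_mul, mul_comm, _root_.zpow_mul, hσ, _root_.one_zpow]
  · rw [← zpow_natCast, ← zpow_natCast, ← _root_.zpow_mul, ← hgcd, Nat.gcd_eq_gcd_ab,
      _root_.zpow_add, _root_.zpow_mul _ ((r + s : ℕ) : ℤ), hσ, _root_.one_zpow, mul_one, mul_comm]

theorem Complex.exists_pow_add_eq_one_and_pow_eq_exp_gcd (r s : ℕ) :
    ∃ w : ℂ, w ≠ 0 ∧ w ^ (r + s) = 1 ∧
      w ^ r = Complex.exp (2 * π * Complex.I * (Nat.gcd r s) / (r + s)) := by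
  set x : ℂ := Complex.exp (2 * π * Complex.I / (r + s : ℕ))
  have hx : x ^ (r + s) = 1 := by
    rcases Nat.eq_zero_or_pos (r + s) with h | h
    · rw [h, pow_zero]
    · exact (Complex.isPrimitiveRoot_exp _ h.ne').pow_eq_one
  have hζ : Complex.exp (2 * π * Complex.I * (Nat.gcd r s) / (r + s)) = x ^ Nat.gcd r s := by
    rw [← Complex.exp_nat_mul]
    push_cast
    ring_nf
  obtain ⟨w, hw, hwr⟩ := exists_pow_add_eq_one_and_pow_eq_pow_gcd
    (x := Units.mk0 x (Complex.exp_ne_zero _)) (Units.ext (by simpa using hx))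
  refine ⟨w, w.ne_zero, by simpa using congrArg Units.val hw, ?_⟩
  rw [hζ]
  simpa using congrArg Units.val hwr

namespace Matrix

variable {m K : Type*} [Fintype m] [DecidableEq m] [Field K]

theorem charpoly_diagonal_mul_mul_diagonal_inv {d : m → K} (hd : ∀ i, d i ≠ 0)
    (M : Matrix m m K) :
    (diagonal d * M * diagonal (fun i => (d i)⁻¹)).charpoly = M.charpoly := by
  rw [charpoly_mul_comm, ← Matrix.mul_assoc, diagonal_mul_diagonal]
  simp [hd]

theorem charpoly_smul_eq_scaleRoots [Infinite K] {c : K} (hc : c ≠ 0) (M : Matrix m m K) :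
    (c • M).charpoly = M.charpoly.scaleRoots c := by
  refine Polynomial.funext fun x => ?_
  obtain ⟨y, rfl⟩ : ∃ y, x = c * y := ⟨x / c, by field_simp⟩
  have : scalar m (c * y) - c • M = c • (scalar m y - M) := by
    rw [smul_sub, scalar_apply, scalar_apply, ← diagonal_smul]
    rfl
  rw [scaleRoots_eval_mul, charpoly_natDegree_eq_dim, eval_charpoly, eval_charpoly, this,
    det_smul]

theorem roots_charpoly_smul [Infinite K] {c : K} (hc : c ≠ 0) (M : Matrix m m K) :
    (c • M).charpoly.roots = M.charpoly.roots.map (c * ·) := by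
  rw [charpoly_smul_eq_scaleRoots hc, roots_scaleRoots _ (IsUnit.mk0 c hc)]

end Matrix

/-- `T_{ij} ≠ 0` forces `i - j ∈ {r, -s}`, and `w ^ (i - j)` equals `c` on both. -/
theorem diagonal_pow_mul_Tg_mul_diagonal_inv {n r s : ℕ} {w c : ℂ} (hw0 : w ≠ 0)
    (hw : w ^ (r + s) = 1) (hc : w ^ r = c) :
    diagonal (fun i : Fin n => w ^ (i : ℕ)) * Tg n r s *
        diagonal (fun i : Fin n => (w ^ (i : ℕ))⁻¹) = c • Tg n r s := by
  ext i j
  rw [mul_diagonal, diagonal_mul, Matrix.smul_apply, smul_eq_mul]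
  simp only [Tg, of_apply]
  split_ifs with h
  · rw [mul_one, mul_one, ← hc]
    rcases h with h | h
    · rw [show (i : ℕ) = j + r by omega, pow_add, mul_right_comm,
        mul_inv_cancel₀ (pow_ne_zero _ hw0), one_mul]
    · rw [show (j : ℕ) = i + s by omega, pow_add, mul_inv, ← mul_assoc,
        mul_inv_cancel₀ (pow_ne_zero _ hw0), one_mul, inv_eq_of_mul_eq_one_right]
      rw [← pow_add, add_comm, hw]
  · simp

theorem stmt_2_general (n r s : ℕ) :
    ∃ d : Fin n → ℂ, (∀ i, d i ≠ 0) ∧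
      Matrix.diagonal d * Tg n r s * Matrix.diagonal (fun i => (d i)⁻¹) =
        Complex.exp (2 * π * Complex.I * (Nat.gcd r s) / (r + s)) • Tg n r s ∧
      ((Tg n r s).charpoly.roots).map
          (fun μ => Complex.exp (2 * π * Complex.I * (Nat.gcd r s) / (r + s)) * μ) =
        (Tg n r s).charpoly.roots := by
  obtain ⟨w, hw0, hw, hwr⟩ := Complex.exists_pow_add_eq_one_and_pow_eq_exp_gcd r s
  have hsim := diagonal_pow_mul_Tg_mul_diagonal_inv (n := n) hw0 hw hwr
  refine ⟨fun i => w ^ (i : ℕ), fun i => pow_ne_zero _ hw0, hsim, ?_⟩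
  rw [← roots_charpoly_smul (Complex.exp_ne_zero _), ← hsim,
    charpoly_diagonal_mul_mul_diagonal_inv fun i => pow_ne_zero _ hw0]

theorem stmt_2 (n r s : ℕ) (hn : 0 < n) (hr : 0 < r) (hs : 0 < s) :
    ∃ d : Fin n → ℂ, (∀ i, d i ≠ 0) ∧
      Matrix.diagonal d * Tg n r s * Matrix.diagonal (fun i => (d i)⁻¹) =
        Complex.exp (2 * π * Complex.I * (Nat.gcd r s) / (r + s)) • Tg n r s ∧
      ((Tg n r s).charpoly.roots).map
          (fun μ => Complex.exp (2 * π * Complex.I * (Nat.gcd r s) / (r + s)) * μ) =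
        (Tg n r s).charpoly.roots :=
  stmt_2_general n r s
end

section
/- Let n, r, s be positive integers and σ = r + s. Then for all indices 1 ≤ i, j ≤ n with i ≢ j (mod σ), the (i,j)-entry of the matrix power T_n(g_{r,s})^σ is zero. -/
open Matrix

/-!
Modulo `σ = r + s` both diagonals `i - j = r` and `i - j = -s` of `T_n(g_{r,s})` lie in the
residue class `i - j ≡ r`. Matrices whose support lies in a single class `i - j ≡ a` multiply
by adding classes, so `T^k` is supported in `i - j ≡ k r`, and for `k = σ` this is `i ≡ j`.
-/

namespace Matrix

variable {ι R G : Type*} [Fintype ι] [Semiring R] [AddMonoid G]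

theorem eq_add_of_mul_apply_ne_zero {A B : Matrix ι ι R} {f : ι → G} {a b : G}
    (hA : ∀ i j, A i j ≠ 0 → f i = f j + a) (hB : ∀ i j, B i j ≠ 0 → f i = f j + b)
    {i j : ι} (h : (A * B) i j ≠ 0) : f i = f j + (b + a) := by
  obtain ⟨l, -, hl⟩ := Finset.exists_ne_zero_of_sum_ne_zero h
  rw [hA i l (left_ne_zero_of_mul hl), hB l j (right_ne_zero_of_mul hl), add_assoc]

theorem eq_nsmul_add_of_pow_apply_ne_zero [DecidableEq ι] {A : Matrix ι ι R} {f : ι → G} {a : G}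
    (hA : ∀ i j, A i j ≠ 0 → f i = f j + a) (k : ℕ) {i j : ι} (h : (A ^ k) i j ≠ 0) :
    f i = f j + k • a := by
  induction k generalizing i j with
  | zero =>
    obtain rfl : i = j := by by_contra hij; simp [one_apply_ne hij] at h
    simp
  | succ k ih =>
    rw [pow_succ] at h
    rw [succ_nsmul']
    exact eq_add_of_mul_apply_ne_zero (fun _ _ hk ↦ ih hk) hA h

end Matrix

theorem natCast_eq_add_of_Tg_apply_ne_zero {n r s : ℕ} {i j : Fin n} (h : Tg n r s i j ≠ 0) :
    ((i : ℕ) : ZMod (r + s)) = (j : ℕ) + r := by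
  have hdiag : (i : ℤ) - j = r ∨ (i : ℤ) - j = -s := by
    by_contra hne
    exact h (if_neg hne)
  have hneg : ((s : ℕ) : ZMod (r + s)) = -r := by
    rw [eq_neg_iff_add_eq_zero, add_comm, ← Nat.cast_add, ZMod.natCast_self]
  rcases hdiag with hd | hd
  · have := congrArg (Int.cast : ℤ → ZMod (r + s)) (eq_add_of_sub_eq' hd)
    push_cast at this
    rw [this, add_comm]
  · have := congrArg (Int.cast : ℤ → ZMod (r + s)) (eq_add_of_sub_eq' hd)
    push_cast at this
    rw [this, hneg, neg_neg, add_comm]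

theorem stmt_3_general (n r s : ℕ) :
    ∀ i j : Fin n, ¬ ((i : ℕ) ≡ (j : ℕ) [MOD r + s]) →
      (Tg n r s ^ (r + s)) i j = 0 := by
  intro i j hij
  by_contra h
  apply hij
  rw [← ZMod.natCast_eq_natCast_iff]
  have hclass := eq_nsmul_add_of_pow_apply_ne_zero (A := Tg n r s)
    (fun _ _ ↦ natCast_eq_add_of_Tg_apply_ne_zero) (r + s) h
  rwa [nsmul_eq_mul, ZMod.natCast_self, zero_mul, add_zero] at hclass

theorem stmt_3 (n r s : ℕ) (hn : 0 < n) (hr : 0 < r) (hs : 0 < s) :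
    ∀ i j : Fin n, ¬ ((i : ℕ) ≡ (j : ℕ) [MOD r + s]) →
      (Tg n r s ^ (r + s)) i j = 0 :=
  stmt_3_general n r s
end

section
/- Let n, r, s be positive integers, σ = r + s, β_σ = n mod σ, and n_σ = (n − β_σ)/σ. Then the σ-th power T_n(g_{r,s})^σ is similar via a permutation matrix to a block-diagonal matrix with exactly σ diagonal blocks, of which β_σ blocks are square of size n_σ + 1 and the remaining σ − β_σ blocks are square of size n_σ. -/
/-! Modulo `σ = r + s` both diagonals of `T_n(g_{r,s})` sit at offset `i - j ≡ r`, so the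
entries of its `k`-th power vanish unless `i - j ≡ k r`. For `k = σ` this means `i ≡ j (mod σ)`:
grouping the indices by their residue mod `σ`, the residue class of `i` having `blockSize n σ i`
elements, makes `T_n(g_{r,s})^σ` block diagonal. -/

open Matrix

/-- Block sizes: `β_σ = n % σ` blocks of size `n_σ + 1` and `σ - β_σ` blocks of
size `n_σ`, where `n_σ = n / σ`. -/
def blockSize (n σ : ℕ) (i : Fin σ) : ℕ :=
  if (i : ℕ) < n % σ then n / σ + 1 else n / σ

namespace Matrix

theorem pow_apply_eq_zero_of_sub_ne {α R G : Type*} [Fintype α] [DecidableEq α] [Semiring R]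
    [AddGroup G] {A : Matrix α α R} {f : α → G} {c : G}
    (hA : ∀ i j, f i - f j ≠ c → A i j = 0) (k : ℕ) {i j : α} (h : f i - f j ≠ k • c) :
    (A ^ k) i j = 0 := by
  induction k generalizing i j with
  | zero =>
    refine one_apply_ne fun hij => h ?_
    rw [hij, sub_self, zero_smul]
  | succ k ih =>
    rw [pow_succ', mul_apply]
    refine Finset.sum_eq_zero fun l _ => ?_
    by_cases hl : f i - f l = c
    · refine mul_eq_zero_of_right _ (ih fun hlj => h ?_)
      rw [← sub_add_sub_cancel _ (f l), hl, hlj, succ_nsmul']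
    · rw [hA _ _ hl, zero_mul]

theorem eq_blockDiagonal'_submatrix {α ι R : Type*} {β : ι → Type*} [DecidableEq ι] [Zero R]
    (A : Matrix α α R) (e : α ≃ Σ i, β i) (hA : ∀ a b, (e a).1 ≠ (e b).1 → A a b = 0) :
    A = (blockDiagonal' fun i => A.submatrix (e.symm ⟨i, ·⟩) (e.symm ⟨i, ·⟩)).submatrix e e := by
  ext a b
  obtain ⟨⟨i, x⟩, rfl⟩ := e.symm.surjective a
  obtain ⟨⟨j, y⟩, rfl⟩ := e.symm.surjective b
  rw [submatrix_apply, e.apply_symm_apply, e.apply_symm_apply]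
  by_cases hij : i = j
  · subst hij
    rw [blockDiagonal'_apply_eq, submatrix_apply]
  · rw [blockDiagonal'_apply_ne _ _ _ hij, hA _ _ (by simpa using hij)]

end Matrix

theorem Tg_apply_eq_zero_of_sub_ne (n r s : ℕ) {i j : Fin n}
    (h : ((i : ℕ) : ZMod (r + s)) - (j : ℕ) ≠ r) : Tg n r s i j = 0 := by
  have hσ : (r : ZMod (r + s)) + s = 0 := by exact_mod_cast ZMod.natCast_self (r + s)
  refine if_neg fun hij => h ?_
  rcases hij with hij | hij
  · exact_mod_cast congrArg (Int.cast : ℤ → ZMod (r + s)) hij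
  · have := congrArg (Int.cast : ℤ → ZMod (r + s)) hij
    push_cast at this
    linear_combination this - hσ

theorem Tg_pow_self_apply_eq_zero (n r s : ℕ) {i j : Fin n}
    (h : (i : ℕ) % (r + s) ≠ (j : ℕ) % (r + s)) : (Tg n r s ^ (r + s)) i j = 0 := by
  refine pow_apply_eq_zero_of_sub_ne (f := fun i : Fin n => ((i : ℕ) : ZMod (r + s)))
    (fun _ _ => Tg_apply_eq_zero_of_sub_ne n r s) (r + s) ?_
  rw [nsmul_eq_mul, ZMod.natCast_self, zero_mul, sub_ne_zero]
  exact (ZMod.natCast_eq_natCast_iff' _ _ _).not.2 h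

theorem lt_blockSize_iff {n σ : ℕ} (i : Fin σ) (q : ℕ) : q < blockSize n σ i ↔ q * σ + i < n := by
  have hn := Nat.div_add_mod' n σ
  have hi := i.isLt
  have hm := Nat.mod_lt n i.pos
  unfold blockSize
  split_ifs with h
  · rw [Nat.lt_succ_iff]
    constructor
    · intro hq
      have := Nat.mul_le_mul_right σ hq
      omega
    · intro hq
      by_contra! hq'
      have := Nat.mul_le_mul_right σ hq'
      rw [Nat.succ_mul] at this
      omega
  · constructor
    · intro hq
      have := Nat.mul_le_mul_right σ hq
      rw [Nat.succ_mul] at this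
      omega
    · intro hq
      by_contra! hq'
      have := Nat.mul_le_mul_right σ hq'
      omega

def residueEquiv (n σ : ℕ) [NeZero σ] : Fin n ≃ Σ i : Fin σ, Fin (blockSize n σ i) where
  toFun a := ⟨⟨a % σ, Nat.mod_lt _ (NeZero.pos σ)⟩,
    ⟨a / σ, (lt_blockSize_iff _ _).2 ((Nat.div_add_mod' a σ).symm ▸ a.isLt)⟩⟩
  invFun p := ⟨p.2 * σ + p.1, (lt_blockSize_iff _ _).1 p.2.isLt⟩
  left_inv a := Fin.ext (Nat.div_add_mod' a σ)
  right_inv := fun ⟨i, q⟩ => by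
    have hi : (q * σ + i) % σ = i := by simp [Nat.mod_eq_of_lt i.isLt]
    have hq : (q * σ + i) / σ = q := by
      rw [add_comm, Nat.add_mul_div_right _ _ (NeZero.pos σ), Nat.div_eq_of_lt i.isLt, zero_add]
    have hfst : (⟨(q * σ + i) % σ, Nat.mod_lt _ (NeZero.pos σ)⟩ : Fin σ) = i := Fin.ext hi
    exact Sigma.ext hfst ((Fin.heq_ext_iff (congrArg _ hfst)).2 hq)

theorem stmt_4_general (n r s : ℕ) (hr : 0 < r) :
    ∃ (M : ∀ i : Fin (r + s),
        Matrix (Fin (blockSize n (r + s) i)) (Fin (blockSize n (r + s) i)) ℂ)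
      (e : Fin n ≃ (Σ i : Fin (r + s), Fin (blockSize n (r + s) i))),
      Tg n r s ^ (r + s) = (Matrix.blockDiagonal' M).submatrix e e := by
  have : NeZero (r + s) := ⟨by omega⟩
  exact ⟨_, _, eq_blockDiagonal'_submatrix _ (residueEquiv n (r + s)) fun a b hab =>
    Tg_pow_self_apply_eq_zero n r s fun h => hab (Fin.ext h)⟩

theorem stmt_4 (n r s : ℕ) (hn : 0 < n) (hr : 0 < r) (hs : 0 < s) :
    ∃ (M : ∀ i : Fin (r + s),
        Matrix (Fin (blockSize n (r + s) i)) (Fin (blockSize n (r + s) i)) ℂ)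
      (e : Fin n ≃ (Σ i : Fin (r + s), Fin (blockSize n (r + s) i))),
      Tg n r s ^ (r + s) = (Matrix.blockDiagonal' M).submatrix e e :=
  stmt_4_general n r s hr
end

section
/- Let n, r, s be positive integers, γ = gcd(r, s), r_γ = r/γ, s_γ = s/γ, β_γ = n mod γ, and n_γ = (n − β_γ)/γ, and assume n_γ ≥ 1. Then the characteristic polynomial of T_n(g_{r,s}) factors as charpoly(T_n(g_{r,s})) = charpoly(T_{n_γ+1}(g_{r_γ,s_γ}))^{β_γ} · charpoly(T_{n_γ}(g_{r_γ,s_γ}))^{γ−β_γ}. Equivalently, T_n(g_{r,s}) is similar via a permutation matrix to a block-diagonal matrix with β_γ blocks equal to T_{n_γ+1}(g_{r_γ,s_γ}) and γ − β_γ blocks equal to T_{n_γ}(g_{r_γ,s_γ}). -/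
open Matrix Polynomial

/-!
Entries of `Tg n (a * γ) (b * γ)` vanish unless `i ≡ j [MOD γ]`, so the matrix is block
diagonal along the residue classes mod `γ`. Writing the class of `c < γ` as `{k * γ + c}`, its
block is `Tg m a b`, where `m = n / γ + 1` for the `n % γ` classes with `c < n % γ` and
`m = n / γ` for the others.
-/

open Finset

lemma Finset.prod_range_ite_lt {M : Type*} [CommMonoid M] {β γ : ℕ} (h : β ≤ γ) (x y : M) :
    ∏ c ∈ range γ, (if c < β then x else y) = x ^ β * y ^ (γ - β) := by
  have hlt : {c ∈ range γ | c < β} = range β := by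
    ext; simp only [mem_filter, mem_range]; omega
  have hge : {c ∈ range γ | ¬c < β} = Ico β γ := by
    ext; simp only [not_lt, mem_filter, mem_range, mem_Ico]; omega
  rw [prod_ite, prod_const, prod_const, hlt, hge, card_range, Nat.card_Ico]

def residueClassSize (n γ c : ℕ) : ℕ := n / γ + if c < n % γ then 1 else 0

lemma mul_add_lt_iff_lt_residueClassSize {n γ c k : ℕ} (hc : c < γ) :
    k * γ + c < n ↔ k < residueClassSize n γ c := by
  unfold residueClassSize
  obtain ⟨hβ, hn⟩ : n % γ < γ ∧ n / γ * γ + n % γ = n :=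
    ⟨Nat.mod_lt n (by omega), Nat.div_add_mod' n γ⟩
  generalize n / γ = q, n % γ = β at *
  subst hn
  rcases lt_trichotomy k q with hk | rfl | hk
  · have : (k + 1) * γ ≤ q * γ := Nat.mul_le_mul_right γ hk
    split_ifs <;> constructor <;> intro <;> nlinarith
  · split_ifs <;> omega
  · have : (q + 1) * γ ≤ k * γ := Nat.mul_le_mul_right γ hk
    split_ifs <;> constructor <;> intro <;> nlinarith

lemma Tg_apply_eq_zero_of_mod_ne {n a b γ : ℕ} {i j : Fin n} (h : (i : ℕ) % γ ≠ j % γ) :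
    Tg n (a * γ) (b * γ) i j = 0 := by
  refine if_neg ?_
  rintro (hij | hij)
  · exact h (Nat.modEq_iff_dvd.mpr ⟨-a, by push_cast at hij ⊢; linarith⟩)
  · exact h (Nat.modEq_iff_dvd.mpr ⟨b, by push_cast at hij ⊢; linarith⟩)

lemma Tg_blockTriangular (n a b γ : ℕ) :
    (Tg n (a * γ) (b * γ)).BlockTriangular fun i => (i : ℕ) % γ :=
  fun _ _ hlt => Tg_apply_eq_zero_of_mod_ne hlt.ne'

lemma Nat.div_mul_add_of_mod_eq {i γ c : ℕ} (h : i % γ = c) : i / γ * γ + c = i := by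
  rw [← h, Nat.div_add_mod']

def residueClassEquiv (n γ c : ℕ) (hc : c < γ) :
    {i : Fin n // (i : ℕ) % γ = c} ≃ Fin (residueClassSize n γ c) where
  toFun i := ⟨i.1 / γ, (mul_add_lt_iff_lt_residueClassSize hc).mp <|
    (Nat.div_mul_add_of_mod_eq i.2).symm ▸ i.1.isLt⟩
  invFun k := ⟨⟨k * γ + c, (mul_add_lt_iff_lt_residueClassSize hc).mpr k.isLt⟩, by
    simp [Nat.mod_eq_of_lt hc]⟩
  left_inv i := Subtype.ext <| Fin.ext <| Nat.div_mul_add_of_mod_eq i.2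
  right_inv k := Fin.ext <| by
    simp [add_comm, Nat.add_mul_div_right _ _ (by omega : 0 < γ), Nat.div_eq_of_lt hc]

lemma Tg_toSquareBlock_reindex {n a b γ c : ℕ} (hc : c < γ) :
    ((Tg n (a * γ) (b * γ)).toSquareBlock (fun i => (i : ℕ) % γ) c).reindex
      (residueClassEquiv n γ c hc) (residueClassEquiv n γ c hc) =
      Tg (residueClassSize n γ c) a b := by
  have hγ : (γ : ℤ) ≠ 0 := by exact_mod_cast (by omega : γ ≠ 0)
  ext k l
  simp only [residueClassEquiv, Tg, Nat.cast_mul, ← neg_mul, toSquareBlock_def, of_apply,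
    reindex_apply, Equiv.symm_mk, Equiv.coe_fn_mk, submatrix_apply, Nat.cast_add,
    add_sub_add_right_eq_sub, ← sub_mul, mul_left_inj' hγ]

lemma charpoly_toSquareBlock_Tg {n a b γ c : ℕ} (hc : c < γ) :
    ((Tg n (a * γ) (b * γ)).toSquareBlock (fun i => (i : ℕ) % γ) c).charpoly =
      if c < n % γ then (Tg (n / γ + 1) a b).charpoly else (Tg (n / γ) a b).charpoly := by
  rw [← charpoly_reindex (residueClassEquiv n γ c hc), Tg_toSquareBlock_reindex,
    residueClassSize]
  by_cases h : c < n % γ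
  · rw [if_pos h, if_pos h]
  · rw [if_neg h, if_neg h, add_zero]

theorem charpoly_Tg_mul (n a b : ℕ) {γ : ℕ} (hγ : 0 < γ) :
    (Tg n (a * γ) (b * γ)).charpoly =
      (Tg (n / γ + 1) a b).charpoly ^ (n % γ) * (Tg (n / γ) a b).charpoly ^ (γ - n % γ) := by
  have hsub : image (fun i : Fin n => (i : ℕ) % γ) univ ⊆ range γ := by
    intro c hc
    obtain ⟨i, -, rfl⟩ := mem_image.mp hc
    exact mem_range.mpr (Nat.mod_lt _ hγ)
  rw [(Tg_blockTriangular n a b γ).charpoly, prod_subset hsub,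
    ← prod_range_ite_lt (Nat.mod_lt n hγ).le]
  · exact prod_congr rfl fun c hc => charpoly_toSquareBlock_Tg (mem_range.mp hc)
  · intro c _ hc
    have : IsEmpty {i : Fin n // (i : ℕ) % γ = c} :=
      ⟨fun i => hc (mem_image.mpr ⟨i, mem_univ _, i.2⟩)⟩
    exact charpoly_isEmpty

theorem stmt_5_general (n r s : ℕ) (hr : 0 < r) :
    (Tg n r s).charpoly =
      (Tg (n / Nat.gcd r s + 1) (r / Nat.gcd r s) (s / Nat.gcd r s)).charpoly
          ^ (n % Nat.gcd r s) *
        (Tg (n / Nat.gcd r s) (r / Nat.gcd r s) (s / Nat.gcd r s)).charpoly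
          ^ (Nat.gcd r s - n % Nat.gcd r s) := by
  have h := charpoly_Tg_mul n (r / Nat.gcd r s) (s / Nat.gcd r s) (Nat.gcd_pos_of_pos_left s hr)
  rwa [Nat.div_mul_cancel (Nat.gcd_dvd_left r s), Nat.div_mul_cancel (Nat.gcd_dvd_right r s)] at h

theorem stmt_5 (n r s : ℕ) (hn : 0 < n) (hr : 0 < r) (hs : 0 < s)
    (hng : 1 ≤ n / Nat.gcd r s) :
    (Tg n r s).charpoly =
      (Tg (n / Nat.gcd r s + 1) (r / Nat.gcd r s) (s / Nat.gcd r s)).charpoly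
          ^ (n % Nat.gcd r s) *
        (Tg (n / Nat.gcd r s) (r / Nat.gcd r s) (s / Nat.gcd r s)).charpoly
          ^ (Nat.gcd r s - n % Nat.gcd r s) :=
  stmt_5_general n r s hr
end

section
/- (Conjecture 1 for r = 1.) Let s be a positive integer and let n = m·(s+1) + β with integers m ≥ 1 and 0 ≤ β ≤ s. Let L be the m×m matrix with (i,j)-entry binomial(β+1, j − i + 1), and let U be the m×m upper bidiagonal matrix with ones on the main diagonal and on the first superdiagonal and zeros elsewhere. Set B = L·U^{s−β}. Then the characteristic polynomial of T_n(g_{1,s}) satisfies charpoly(T_n(g_{1,s}))(X) = X^{β} · q(X^{s+1}), where q is the characteristic polynomial of B. -/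
open Matrix Polynomial

/-- `Lmat m t` is the `m × m` matrix with `(i,j)`-entry `binomial(t, j - i + 1)`. -/
noncomputable def Lmat (m t : ℕ) : Matrix (Fin m) (Fin m) ℂ :=
  Matrix.of fun i j =>
    if (i : ℕ) ≤ (j : ℕ) + 1 then ((t.choose ((j : ℕ) + 1 - (i : ℕ)) : ℕ) : ℂ) else 0

/-- `Umat m` is the `m × m` upper bidiagonal matrix with ones on the main
diagonal and on the first superdiagonal, zeros elsewhere. -/
noncomputable def Umat (m : ℕ) : Matrix (Fin m) (Fin m) ℂ :=
  Matrix.of fun i j => if (j : ℕ) = (i : ℕ) ∨ (j : ℕ) = (i : ℕ) + 1 then 1 else 0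

/-!
Let `p n` be the characteristic polynomial of `Tg n 1 s`. Expanding `det (X - Tg (s + d + 1) 1 s)`
along its first row gives `p (s + d + 1) = X * p (s + d) - p d`, and `p n = X ^ n` for `n ≤ s`.

By Vandermonde's identity, `B = Lmat m (β + 1) * Umat m ^ (s - β)` has entries
`binomial(s + 1, j + 1 - i)`, corrected by `- binomial(s - β, j + 1)` in its first row. So `X - B`
is upper Hessenberg and Toeplitz below its first row, with symbol `X z - (1 + z) ^ (s + 1)`;
expanding along the first column shows that its determinant is the `m`-th coefficient of
`(1 + z) ^ (s - β) * D z`, where `((1 + z) ^ (s + 1) - X z) * D z = 1`. By Pascal's rule these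
coefficients, evaluated at `X ^ (s + 1)` and multiplied by `X ^ β`, satisfy the recurrence of `p`.
-/

open Finset

section BinomConv

variable {R : Type*} [CommRing R]

/-- The coefficients of `(1 + z)^a * ∑ D t z^t`. -/
def binomConv (a : ℕ) (D : ℕ → R) (m : ℕ) : R :=
  ∑ j ∈ range (m + 1), (a.choose j : R) * D (m - j)

theorem binomConv_zero_left (D : ℕ → R) (m : ℕ) : binomConv 0 D m = D m := by
  simp [binomConv, sum_range_succ', Nat.choose_zero_succ]

theorem binomConv_zero_right (a : ℕ) (D : ℕ → R) : binomConv a D 0 = D 0 := by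
  simp [binomConv]

theorem binomConv_succ_succ (a : ℕ) (D : ℕ → R) (m : ℕ) :
    binomConv (a + 1) D (m + 1) = binomConv a D (m + 1) + binomConv a D m := by
  simp only [binomConv, sum_range_succ' _ (m + 1), Nat.choose_succ_succ', Nat.cast_add,
    add_mul, sum_add_distrib, Nat.choose_zero_right, Nat.add_sub_add_right]
  ring

theorem Nat.cast_choose_add_eq_sum_range (a b n : ℕ) :
    ((a + b).choose n : R) = ∑ l ∈ range (n + 1), (a.choose l : R) * (b.choose (n - l) : R) := by
  rw [Nat.add_choose_eq, Finset.Nat.sum_antidiagonal_eq_sum_range_succ_mk]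
  push_cast
  rfl

theorem eq_X_pow_mul_binomConv_comp {s : ℕ} {p D : ℕ → R[X]}
    (hp_le : ∀ n ≤ s, p n = X ^ n) (hp_rec : ∀ d, p (s + d + 1) = X * p (s + d) - p d)
    (hD_zero : D 0 = 1) (hD : ∀ t, binomConv (s + 1) D (t + 1) = X * D t) (m : ℕ) :
    ∀ β ≤ s, p (m * (s + 1) + β) = X ^ β * (binomConv (s - β) D m).comp (X ^ (s + 1)) := by
  induction m with
  | zero =>
    intro β hβ
    simp [hp_le β hβ, binomConv_zero_right, hD_zero]
  | succ m ihm =>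
    intro β hβ
    induction β with
    | zero =>
      have hconv : binomConv s D (m + 1) = X * D m - binomConv s D m := by
        rw [← hD, binomConv_succ_succ]; ring
      have h_top : p (s + m * (s + 1)) = X ^ s * (D m).comp (X ^ (s + 1)) := by
        rw [add_comm, ihm s le_rfl, Nat.sub_self, binomConv_zero_left]
      have h_bot : p (m * (s + 1)) = (binomConv s D m).comp (X ^ (s + 1)) := by
        simpa using ihm 0 (Nat.zero_le _)
      rw [show (m + 1) * (s + 1) + 0 = s + m * (s + 1) + 1 by ring, hp_rec, h_top, h_bot,
        Nat.sub_zero, hconv, sub_comp, mul_comp, X_comp]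
      ring
    | succ β ihβ =>
      have hconv : binomConv (s - (β + 1)) D (m + 1)
          = binomConv (s - β) D (m + 1) - binomConv (s - (β + 1)) D m := by
        rw [show s - β = s - (β + 1) + 1 by omega, binomConv_succ_succ]; ring
      rw [show (m + 1) * (s + 1) + (β + 1) = s + (m * (s + 1) + β + 1) + 1 by ring, hp_rec,
        show s + (m * (s + 1) + β + 1) = (m + 1) * (s + 1) + β by ring, ihβ (by omega),
        add_assoc _ β, ihm (β + 1) hβ, hconv, sub_comp]
      ring

end BinomConv

theorem Fin.val_succAbove {n : ℕ} (p : Fin (n + 1)) (i : Fin n) :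
    (p.succAbove i : ℕ) = if (i : ℕ) < p then (i : ℕ) else i + 1 := by
  unfold Fin.succAbove
  split_ifs <;> simp_all [Fin.lt_def]

section Hessenberg

variable {R : Type*} [CommRing R]

def hessToeplitz (v c : ℕ → R) (k : ℕ) : Matrix (Fin k) (Fin k) R :=
  of fun i j => if (i : ℕ) = 0 then v j else if (i : ℕ) ≤ j + 1 then c (j + 1 - i) else 0

theorem det_hessToeplitz_succ {c : ℕ → R} (hc : c 0 = -1) (k : ℕ) (v : ℕ → R) :
    (hessToeplitz v c (k + 1)).det
      = ∑ j ∈ range (k + 1), v j * (hessToeplitz (fun j => c (j + 1)) c (k - j)).det := by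
  induction k generalizing v with
  | zero => simp [hessToeplitz]
  | succ k ih =>
    have hminor₀ : (hessToeplitz v c (k + 2)).submatrix (Fin.succAbove 0) Fin.succ
        = hessToeplitz (fun j => c (j + 1)) c (k + 1) := by
      ext i j : 1
      simp only [submatrix_apply, Fin.succAbove_zero, hessToeplitz, of_apply, Fin.val_succ]
      by_cases hi : (i : ℕ) = 0 <;> simp [hi]
    have hminor₁ : (hessToeplitz v c (k + 2)).submatrix (Fin.succAbove 1) Fin.succ
        = hessToeplitz (fun j => v (j + 1)) c (k + 1) := by
      ext i j : 1
      simp only [submatrix_apply, hessToeplitz, of_apply, Fin.val_succ, Fin.val_succAbove]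
      by_cases hi : (i : ℕ) = 0 <;> simp [hi]
    have h₀₀ : hessToeplitz v c (k + 2) 0 0 = v 0 := rfl
    have h₁₀ : hessToeplitz v c (k + 2) 1 0 = -1 := by simp [hessToeplitz, hc]
    have hcol : ∀ i : Fin k, hessToeplitz v c (k + 2) i.succ.succ 0 = 0 := fun i => by
      simp [hessToeplitz]
    rw [det_succ_column_zero, Fin.sum_univ_succ, Fin.sum_univ_succ, Fin.succ_zero_eq_one, h₀₀, h₁₀,
      hminor₀, hminor₁, ih (fun j => v (j + 1)), sum_range_succ' _ (k + 1)]
    simp only [hcol, Fin.val_zero, Fin.val_one, pow_zero, pow_one, one_mul, mul_zero, zero_mul,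
      sum_const_zero, add_zero, neg_mul, neg_neg, Nat.sub_zero]
    rw [add_comm]
    congr 1
    exact sum_congr rfl fun j _ => by rw [Nat.add_sub_add_right]

theorem det_hessToeplitz_add_choose {c : ℕ → R} (hc : c 0 = -1) (a m : ℕ) :
    (hessToeplitz (fun j => c (j + 1) + (a.choose (j + 1) : R)) c m).det
      = binomConv a (fun t => (hessToeplitz (fun j => c (j + 1)) c t).det) m := by
  cases m with
  | zero => simp [binomConv]
  | succ m =>
    rw [det_hessToeplitz_succ hc, binomConv, sum_range_succ' _ (m + 1), Nat.sub_zero,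
      det_hessToeplitz_succ hc]
    simp only [add_mul, sum_add_distrib, Nat.choose_zero_right, Nat.cast_one, one_mul]
    rw [add_comm]
    congr 1
    exact sum_congr rfl fun j _ => by rw [Nat.add_sub_add_right]

end Hessenberg

section UpperTriangular

variable {R : Type*} [CommRing R]

theorem sum_range_succ_ite_le (f : ℕ → ℕ → R) (i n : ℕ) :
    ∑ k ∈ range (n + 1), (if i ≤ k then f (k - i) (n - k) else 0)
      = if i ≤ n then ∑ l ∈ range (n - i + 1), f l (n - i - l) else 0 := by
  induction i generalizing n with
  | zero => simp
  | succ i ih =>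
    cases n with
    | zero => simp
    | succ n =>
      rw [sum_range_succ']
      simpa [Nat.add_sub_add_right] using ih n

theorem of_mul_of_eq_of_sum_range {m : ℕ} (F G : ℕ → ℕ → R) (hG : ∀ k j, j < k → G k j = 0) :
    (of fun i j : Fin m => F i j) * (of fun i j : Fin m => G i j)
      = of fun i j : Fin m => ∑ k ∈ range (j + 1), F i k * G k j := by
  ext i j : 1
  simp only [mul_apply, of_apply]
  rw [Fin.sum_univ_eq_sum_range (fun k => F i k * G k j)]
  exact (sum_subset (range_subset_range.mpr j.isLt)
    fun k hk hkj => by simp_all [hG k j (by simpa using hkj)]).symm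

def upperToeplitz (a : ℕ → R) (m : ℕ) : Matrix (Fin m) (Fin m) R :=
  of fun i j => if (i : ℕ) ≤ j then a (j - i) else 0

theorem upperToeplitz_mul_upperToeplitz (a b : ℕ → R) (m : ℕ) :
    upperToeplitz a m * upperToeplitz b m
      = upperToeplitz (fun n => ∑ l ∈ range (n + 1), a l * b (n - l)) m := by
  rw [upperToeplitz, upperToeplitz,
    of_mul_of_eq_of_sum_range (fun i k => if i ≤ k then a (k - i) else 0)
      (fun k j => if k ≤ j then b (j - k) else 0) (fun k j h => if_neg (by omega))]
  ext i j : 1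
  simp only [of_apply, upperToeplitz, ite_mul, zero_mul]
  rw [← sum_range_succ_ite_le (fun l r => a l * b r)]
  refine sum_congr rfl fun k hk => ?_
  rw [if_pos (show k ≤ j by simpa [Nat.lt_succ_iff] using hk)]

end UpperTriangular

theorem Umat_pow (m t : ℕ) : Umat m ^ t = upperToeplitz (fun n => (t.choose n : ℂ)) m := by
  induction t with
  | zero =>
    ext i j : 1
    rw [pow_zero]
    simp only [upperToeplitz, one_apply, of_apply, Fin.ext_iff]
    rcases le_or_gt (i : ℕ) j with h | h
    · obtain ⟨d, hd⟩ := Nat.exists_eq_add_of_le h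
      rcases d with _ | d <;> simp [hd]
    · rw [if_neg (by omega), if_neg (by omega)]
  | succ t ih =>
    have hU : Umat m = upperToeplitz (fun n => ((1 : ℕ).choose n : ℂ)) m := by
      ext i j : 1
      simp only [Umat, upperToeplitz, of_apply]
      rcases le_or_gt (i : ℕ) j with h | h
      · obtain ⟨d, hd⟩ := Nat.exists_eq_add_of_le h
        rcases d with _ | _ | d <;> simp [hd, Nat.choose_succ_succ]
      · rw [if_neg (by omega), if_neg (by omega)]
    rw [pow_succ, ih, hU, upperToeplitz_mul_upperToeplitz]
    simp only [← Nat.cast_choose_add_eq_sum_range]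

theorem charmatrix_Tg_submatrix {n k r s c : ℕ} (e e' : Fin k → Fin n)
    (he : ∀ i, (e i : ℕ) = i + c) (he' : ∀ j, (e' j : ℕ) = j + c) :
    (charmatrix (Tg n r s)).submatrix e e' = charmatrix (Tg k r s) := by
  ext i j : 1
  simp only [submatrix_apply, charmatrix_apply, diagonal_apply, Tg, of_apply, Fin.ext_iff, he, he']
  congr 2
  · simp
  · push_cast; ring_nf

theorem charpoly_Tg_of_le {n s : ℕ} (h : n ≤ s) : (Tg n 1 s).charpoly = X ^ n := by
  rw [← charpoly_transpose, charpoly_of_isUpperTriangular]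
  · obtain rfl | hs := Nat.eq_zero_or_pos s
    · obtain rfl : n = 0 := Nat.le_zero.mp h
      simp
    · simp [Tg, hs.ne']
  · intro i j hij
    simp only [transpose_apply, Tg, of_apply]
    have : (j : ℕ) < i := hij
    rw [if_neg (by omega)]

/-- After reindexing by `Fin s ⊕ Fin d`, this minor is block upper triangular, with an upper
triangular `s × s` block having `-1` on its diagonal and the block `charmatrix (Tg d 1 s)`. -/
theorem det_charmatrix_Tg_submatrix_succ_succAbove (s d : ℕ) :
    ((charmatrix (Tg (s + d + 1) 1 s)).submatrix Fin.succ
        (Fin.succAbove ⟨s, by omega⟩)).det = (-1) ^ s * (Tg d 1 s).charpoly := by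
  set K := (charmatrix (Tg (s + d + 1) 1 s)).submatrix Fin.succ (Fin.succAbove ⟨s, by omega⟩)
  have hK : ∀ i j, K i j = charmatrix (Tg (s + d + 1) 1 s) (i.succ)
      (Fin.succAbove ⟨s, by omega⟩ j) := fun _ _ => rfl
  rw [← det_submatrix_equiv_self finSumFinEquiv K, ← fromBlocks_toBlocks (K.submatrix _ _)]
  have h₂₁ : (K.submatrix finSumFinEquiv finSumFinEquiv).toBlocks₂₁ = 0 := by
    refine Matrix.ext fun i j => ?_
    simp only [toBlocks₂₁, submatrix_apply, finSumFinEquiv_apply_right, finSumFinEquiv_apply_left,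
      hK, charmatrix_apply, diagonal_apply, Tg, of_apply, Fin.ext_iff, Fin.val_succ, Fin.val_natAdd,
      Fin.val_castAdd, Fin.val_succAbove, Fin.is_lt, ↓reduceIte, Nat.cast_add, Nat.cast_one,
      MonoidWithZeroHom.map_ite_one_zero, Matrix.zero_apply]
    rw [if_neg (by omega), if_neg (by omega), sub_zero]
  have h₁₁ : (K.submatrix finSumFinEquiv finSumFinEquiv).toBlocks₁₁.det = (-1) ^ s := by
    rw [det_of_isUpperTriangular]
    · simp [toBlocks₁₁, hK, charmatrix_apply, diagonal_apply, Tg, Fin.ext_iff, Fin.val_succAbove]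
    · intro i j hij
      have : (j : ℕ) < i := hij
      simp only [toBlocks₁₁, submatrix_apply, finSumFinEquiv_apply_left, hK, charmatrix_apply,
        diagonal_apply, Tg, of_apply, Fin.ext_iff, Fin.val_succ, Fin.val_castAdd, Fin.val_succAbove,
        Fin.is_lt, ↓reduceIte, Nat.cast_add, Nat.cast_one, MonoidWithZeroHom.map_ite_one_zero]
      rw [if_neg (by omega), if_neg (by omega), sub_zero]
  have h₂₂ : (K.submatrix finSumFinEquiv finSumFinEquiv).toBlocks₂₂ = charmatrix (Tg d 1 s) :=
    charmatrix_Tg_submatrix (c := s + 1) _ _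
      (fun i => by simp only [finSumFinEquiv_apply_right, Fin.val_succ, Fin.val_natAdd]; ring)
      (fun j => by
        simp only [finSumFinEquiv_apply_right, Fin.val_succAbove, Fin.val_natAdd,
          add_lt_iff_neg_left, not_lt_zero, ↓reduceIte]
        ring)
  rw [h₂₁, det_fromBlocks_zero₂₁, h₁₁, h₂₂]
  rfl

theorem charpoly_Tg_add_succ (s d : ℕ) :
    (Tg (s + d + 1) 1 s).charpoly = X * (Tg (s + d) 1 s).charpoly - (Tg d 1 s).charpoly := by
  have hrow : ∀ j, charmatrix (Tg (s + d + 1) 1 s) (0 : Fin (s + d + 1)) j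
      = (if j = 0 then X else 0) - (if j = ⟨s, by omega⟩ then 1 else 0) := by
    intro j
    rw [charmatrix_apply, diagonal_apply, Tg, of_apply, apply_ite C, C_1, C_0]
    congr 1
    · exact if_congr eq_comm rfl rfl
    · exact if_congr (by simp only [Fin.ext_iff, Fin.val_zero]; omega) rfl rfl
  rw [charpoly, det_succ_row_zero]
  simp only [hrow, mul_sub, sub_mul, mul_ite, ite_mul, mul_one, mul_zero, zero_mul, sum_sub_distrib,
    sum_ite_eq', mem_univ, if_true]
  rw [det_charmatrix_Tg_submatrix_succ_succAbove,
    charmatrix_Tg_submatrix (c := 1) Fin.succ _ (fun _ => rfl) (fun _ => by simp)]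
  simp only [Fin.val_zero, pow_zero, one_mul, charpoly]
  rw [← mul_assoc, ← mul_pow, neg_one_mul, neg_neg, one_pow, one_mul]


theorem Lmat_mul_Umat_pow_apply {m β s : ℕ} (hβ : β ≤ s) (i j : Fin m) :
    (Lmat m (β + 1) * Umat m ^ (s - β)) i j
      = (if (i : ℕ) ≤ j + 1 then ((s + 1).choose (j + 1 - i) : ℂ) else 0)
        - if (i : ℕ) = 0 then ((s - β).choose (j + 1) : ℂ) else 0 := by
  have hvdm := sum_range_succ_ite_le (fun l r => ((β + 1).choose l : ℂ) * ((s - β).choose r : ℂ))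
    i (j + 1)
  rw [← Nat.cast_choose_add_eq_sum_range, show β + 1 + (s - β) = s + 1 by omega,
    sum_range_succ'] at hvdm
  rw [Umat_pow, Lmat, upperToeplitz,
    of_mul_of_eq_of_sum_range (fun i k => if i ≤ k + 1 then ((β + 1).choose (k + 1 - i) : ℂ) else 0)
      (fun k j => if k ≤ j then ((s - β).choose (j - k) : ℂ) else 0)
      (fun k j h => if_neg (by omega)),
    of_apply, ← hvdm]
  simp only [Nat.le_zero, Nat.zero_sub, Nat.sub_zero, Nat.choose_zero_right, Nat.cast_one, one_mul,
    Nat.add_sub_add_right, add_sub_cancel_right]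
  refine sum_congr rfl fun k hk => ?_
  rw [if_pos (show k ≤ j by simpa [Nat.lt_succ_iff] using hk), ite_mul, zero_mul]

/-- The coefficients of `X z - (1 + z) ^ (s + 1)`. -/
noncomputable def symbolCoeff (s n : ℕ) : ℂ[X] :=
  (if n = 1 then X else 0) - ((s + 1).choose n : ℂ[X])

noncomputable def hessDet (s t : ℕ) : ℂ[X] :=
  (hessToeplitz (fun j => symbolCoeff s (j + 1)) (symbolCoeff s) t).det

theorem symbolCoeff_zero (s : ℕ) : symbolCoeff s 0 = -1 := by
  simp [symbolCoeff]

theorem hessDet_zero (s : ℕ) : hessDet s 0 = 1 :=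
  det_isEmpty

theorem hessDet_succ (s t : ℕ) :
    hessDet s (t + 1) = ∑ j ∈ range (t + 1), symbolCoeff s (j + 1) * hessDet s (t - j) :=
  det_hessToeplitz_succ (symbolCoeff_zero s) t _

theorem binomConv_hessDet_succ (s t : ℕ) :
    binomConv (s + 1) (hessDet s) (t + 1) = X * hessDet s t := by
  rw [binomConv, sum_range_succ', Nat.sub_zero, hessDet_succ]
  simp only [symbolCoeff, sub_mul, sum_sub_distrib, ite_mul, zero_mul, Nat.add_sub_add_right,
    Nat.add_eq_right, sum_ite_eq', mem_range, Nat.zero_lt_succ, if_true,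
    Nat.choose_zero_right, Nat.cast_one, one_mul, Nat.sub_zero]
  ring

theorem charmatrix_Lmat_mul_Umat_pow {m β s : ℕ} (hβ : β ≤ s) :
    charmatrix (Lmat m (β + 1) * Umat m ^ (s - β))
      = hessToeplitz (fun j => symbolCoeff s (j + 1) + ((s - β).choose (j + 1) : ℂ[X]))
          (symbolCoeff s) m := by
  ext i j : 1
  rw [charmatrix_apply, Lmat_mul_Umat_pow_apply hβ]
  rcases Nat.eq_zero_or_pos (i : ℕ) with hi | hi
  · simp only [hessToeplitz, symbolCoeff, of_apply, diagonal_apply, Fin.ext_iff, hi,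
      (eq_comm : 0 = (j : ℕ) ↔ _), Nat.add_eq_right, le_add_iff_nonneg_left, zero_le, ↓reduceIte,
      tsub_zero, map_sub, map_natCast]
    ring
  · simp only [hessToeplitz, symbolCoeff, of_apply, diagonal_apply, Fin.ext_iff, hi.ne', ↓reduceIte,
      sub_zero, Nat.add_eq_right]
    split_ifs <;> first | (exfalso; omega) | simp

theorem charpoly_Lmat_mul_Umat_pow {m β s : ℕ} (hβ : β ≤ s) :
    (Lmat m (β + 1) * Umat m ^ (s - β)).charpoly = binomConv (s - β) (hessDet s) m := by
  rw [charpoly, charmatrix_Lmat_mul_Umat_pow hβ, det_hessToeplitz_add_choose (symbolCoeff_zero s)]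
  rfl

theorem stmt_7_general (s : ℕ) (m β n : ℕ) (hβ : β ≤ s)
    (hn : n = m * (s + 1) + β) :
    (Tg n 1 s).charpoly =
      X ^ β *
        ((Lmat m (β + 1) * Umat m ^ (s - β)).charpoly.comp (X ^ (s + 1))) := by
  subst hn
  rw [charpoly_Lmat_mul_Umat_pow hβ]
  exact eq_X_pow_mul_binomConv_comp (fun _ => charpoly_Tg_of_le) (charpoly_Tg_add_succ s)
    (hessDet_zero s) (binomConv_hessDet_succ s) m β hβ

theorem stmt_7 (s : ℕ) (hs : 0 < s) (m β n : ℕ) (hm : 1 ≤ m) (hβ : β ≤ s)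
    (hn : n = m * (s + 1) + β) :
    (Tg n 1 s).charpoly =
      X ^ β *
        ((Lmat m (β + 1) * Umat m ^ (s - β)).charpoly.comp (X ^ (s + 1))) :=
  stmt_7_general s m β n hβ hn
end

section
/- Let r, s be positive integers and σ = r + s. Then for every θ with 0 < θ ≤ π, one has r^{r}·s^{s}·sin(θ)^{σ} ≤ σ^{σ}·sin((r/σ)θ)^{r}·sin((s/σ)θ)^{s}; equivalently, 𝔟_{r,s}(θ) ≤ σ^{σ}/(r^{r}·s^{s}) = R^{σ} for all θ ∈ (0, π] (note sin((r/σ)θ) > 0 and sin((s/σ)θ) > 0 there, since 0 < rθ/σ < π and 0 < sθ/σ < π). Thus 𝔟_{r,s} attains its supremum value R^{σ} at θ = 0 (as a limit). -/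
/-!
Concavity of `sin` on `[0, π]` gives `sin (l θ) ≥ l sin θ` for `l ∈ [0, 1]`. Applying this with
`l = r/σ` and `l = s/σ` and raising to the powers `r` and `s` bounds the right-hand side below by
`σ^σ (r/σ)^r (s/σ)^s sin^σ θ = r^r s^s sin^σ θ`.
-/

open Real

lemma mul_sin_le_sin_mul {l θ : ℝ} (hl₀ : 0 ≤ l) (hl₁ : l ≤ 1) (hθ₀ : 0 ≤ θ) (hθπ : θ ≤ π) :
    l * sin θ ≤ sin (l * θ) := by
  simpa using strictConcaveOn_sin_Icc.concaveOn.2 (x := θ) (y := 0) ⟨hθ₀, hθπ⟩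
    ⟨le_rfl, pi_pos.le⟩ hl₀ (sub_nonneg.2 hl₁) (add_sub_cancel l 1)

lemma add_pow_add_mul_div_pow_mul_div_pow (m n : ℕ) (x : ℝ) :
    ((m : ℝ) + n) ^ (m + n) * ((m / (m + n) * x) ^ m * (n / (m + n) * x) ^ n) =
      (m : ℝ) ^ m * (n : ℝ) ^ n * x ^ (m + n) := by
  rcases eq_or_ne ((m : ℝ) + n) 0 with hσ | hσ
  · obtain ⟨rfl, rfl⟩ : m = 0 ∧ n = 0 := by
      have : m + n = 0 := by exact_mod_cast hσ
      omega
    -- `0 / 0 = 0` and `0 ^ 0 = 1` make both sides `1`.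
    simp
  · rw [mul_pow, mul_pow, div_pow, div_pow, pow_add]
    field_simp
    ring

lemma div_add_mul_sin_pow_le (m n : ℕ) {θ : ℝ} (hθ₀ : 0 ≤ θ) (hθπ : θ ≤ π) :
    ((m : ℝ) / (m + n) * sin θ) ^ m * ((n : ℝ) / (m + n) * sin θ) ^ n ≤
      sin ((m : ℝ) / (m + n) * θ) ^ m * sin ((n : ℝ) / (m + n) * θ) ^ n := by
  have hsin : 0 ≤ sin θ := sin_nonneg_of_nonneg_of_le_pi hθ₀ hθπ
  have hm : (m : ℝ) / (m + n) * sin θ ≤ sin ((m : ℝ) / (m + n) * θ) :=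
    mul_sin_le_sin_mul (by positivity) (div_le_one_of_le₀ (by simp) (by positivity)) hθ₀ hθπ
  have hn : (n : ℝ) / (m + n) * sin θ ≤ sin ((n : ℝ) / (m + n) * θ) :=
    mul_sin_le_sin_mul (by positivity) (div_le_one_of_le₀ (by simp) (by positivity)) hθ₀ hθπ
  exact mul_le_mul (pow_le_pow_left₀ (by positivity) hm m) (pow_le_pow_left₀ (by positivity) hn n)
    (by positivity) (pow_nonneg ((by positivity : (0 : ℝ) ≤ _).trans hm) m)

theorem stmt_14_general (r s : ℕ) :
    ∀ θ : ℝ, 0 < θ → θ ≤ π →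
      (r : ℝ) ^ r * (s : ℝ) ^ s * Real.sin θ ^ (r + s) ≤
        ((r : ℝ) + s) ^ (r + s) *
          (Real.sin (((r : ℝ) / ((r : ℝ) + s)) * θ) ^ r *
            Real.sin (((s : ℝ) / ((r : ℝ) + s)) * θ) ^ s) := by
  intro θ hθ₀ hθπ
  rw [← add_pow_add_mul_div_pow_mul_div_pow]
  exact mul_le_mul_of_nonneg_left (div_add_mul_sin_pow_le r s hθ₀.le hθπ) (by positivity)

theorem stmt_14 (r s : ℕ) (hr : 0 < r) (hs : 0 < s) :
    ∀ θ : ℝ, 0 < θ → θ ≤ π →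
      (r : ℝ) ^ r * (s : ℝ) ^ s * Real.sin θ ^ (r + s) ≤
        ((r : ℝ) + s) ^ (r + s) *
          (Real.sin (((r : ℝ) / ((r : ℝ) + s)) * θ) ^ r *
            Real.sin (((s : ℝ) / ((r : ℝ) + s)) * θ) ^ s) :=
  stmt_14_general r s
end

section
/- Let n, r, s be positive integers and σ = r + s. If λ is a real, positive eigenvalue of T_n(g_{r,s}), then 0 < λ ≤ R, where R = σ/(r^{r/σ}·s^{s/σ}); i.e., every positive real eigenvalue of T_n(g_{r,s}) is bounded above by σ·r^{−r/σ}·s^{−s/σ}. -/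
/-!
Conjugating `T_n(g_{r,s})` by `diag(ρ^i)` multiplies the entry on the diagonal of
offset `m = i - j` by `ρ^m` and leaves the spectrum unchanged, so the row-sum bound coming from
Gershgorin's theorem gives `|λ| ≤ ρ^r + ρ^(-s)` for every `ρ > 0`. The minimising choice
`ρ = (s/r)^(1/σ)` turns the right-hand side into `R`.
-/

open Matrix Polynomial Real

namespace Finset

theorem sum_ite_mem_comp_le {ι κ β : Type*} [Fintype ι] [DecidableEq κ] [AddCommMonoid β]
    [PartialOrder β] [IsOrderedAddMonoid β] {g : ι → κ} (hg : Function.Injective g)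
    (S : Finset κ) {f : κ → β} (hf : ∀ m ∈ S, 0 ≤ f m) :
    ∑ i, (if g i ∈ S then f (g i) else 0) ≤ ∑ m ∈ S, f m := by
  rw [← sum_filter, ← sum_image hg.injOn]
  refine sum_le_sum_of_subset_of_nonneg ?_ fun m hm _ => hf m hm
  intro m hm
  obtain ⟨i, hi, rfl⟩ := mem_image.mp hm
  exact (mem_filter.mp hi).2

end Finset

namespace Matrix

variable {n : Type*} [Fintype n] [DecidableEq n]

theorem spectrum_of_diagonal_conj {R : Type*} [CommRing R] (A : Matrix n n R) (d : n → Rˣ) :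
    spectrum R (of fun i j => (d i : R) * A i j * ↑(d j)⁻¹) = spectrum R A := by
  let u : (Matrix n n R)ˣ :=
    Units.map (diagonalRingHom n R : (n → R) →* Matrix n n R) (MulEquiv.piUnits.symm d)
  have hconj : of (fun i j => (d i : R) * A i j * ↑(d j)⁻¹) = u * A * u⁻¹ := by
    ext i j
    simp [u, mul_diagonal, diagonal_mul]
  rw [hconj, spectrum.units_conjugate]

theorem exists_norm_le_sum_norm_of_mem_spectrum {K : Type*} [NormedField K] {A : Matrix n n K}
    {μ : K} (hμ : μ ∈ spectrum K A) : ∃ k, ‖μ‖ ≤ ∑ j, ‖A k j‖ := by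
  rw [← spectrum_toLin', ← Module.End.hasEigenvalue_iff_mem_spectrum] at hμ
  obtain ⟨k, hk⟩ := eigenvalue_mem_ball hμ
  refine ⟨k, ?_⟩
  rw [← Finset.add_sum_erase _ _ (Finset.mem_univ k)]
  calc ‖μ‖ ≤ ‖A k k‖ + ‖μ - A k k‖ := norm_le_norm_add_norm_sub' μ (A k k)
    _ ≤ _ := by gcongr; exact mem_closedBall_iff_norm.mp hk

end Matrix

theorem Real.rpow_add_rpow_neg_of_eq {a b ρ : ℝ} (ha : 0 < a) (hb : 0 < b)
    (hρ : ρ = (b / a) ^ (1 / (a + b))) :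
    ρ ^ a + ρ ^ (-b) = (a + b) / (a ^ (a / (a + b)) * b ^ (b / (a + b))) := by
  have hab : a + b ≠ 0 := (add_pos ha hb).ne'
  have hρa : ρ ^ a = b ^ (a / (a + b)) / a ^ (a / (a + b)) := by
    rw [hρ, ← rpow_mul (div_pos hb ha).le, div_rpow hb.le ha.le, one_div_mul_eq_div]
  have hρb : ρ ^ (-b) = a ^ (b / (a + b)) / b ^ (b / (a + b)) := by
    rw [hρ, ← rpow_mul (div_pos hb ha).le, mul_neg, rpow_neg (div_pos hb ha).le,
      ← inv_rpow (div_pos hb ha).le, inv_div, div_rpow ha.le hb.le, one_div_mul_eq_div]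
  have hpow : ∀ {x : ℝ}, 0 < x → x ^ (a / (a + b)) * x ^ (b / (a + b)) = x := fun hx => by
    rw [← rpow_add hx, ← add_div, div_self hab, rpow_one]
  rw [hρa, hρb, div_add_div _ _ (rpow_pos_of_pos ha _).ne' (rpow_pos_of_pos hb _).ne', hpow hb,
    hpow ha, add_comm]

theorem norm_le_sum_zpow_of_mem_spectrum_Tg {n r s : ℕ} {μ : ℂ} (hμ : μ ∈ spectrum ℂ (Tg n r s))
    {ρ : ℝ} (hρ : 0 < ρ) : ‖μ‖ ≤ ∑ m ∈ ({(r : ℤ), -(s : ℤ)} : Finset ℤ), ρ ^ m := by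
  let u : ℂˣ := Units.mk0 (ρ : ℂ) (by exact_mod_cast hρ.ne')
  rw [← spectrum_of_diagonal_conj _ fun i : Fin n => u ^ (i : ℤ)] at hμ
  obtain ⟨k, hk⟩ := exists_norm_le_sum_norm_of_mem_spectrum hμ
  have hentry (j : Fin n) : ‖((u ^ (k : ℤ) : ℂˣ) : ℂ) * Tg n r s k j * ↑(u ^ (j : ℤ))⁻¹‖ =
      if (k : ℤ) - j ∈ ({(r : ℤ), -(s : ℤ)} : Finset ℤ) then ρ ^ ((k : ℤ) - j) else 0 := by
    rw [mul_right_comm, ← Units.val_mul, ← _root_.zpow_neg, ← _root_.zpow_add, ← sub_eq_add_neg,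
      norm_mul, Units.val_zpow_eq_zpow_val, norm_zpow, Units.val_mk0, Complex.norm_real,
      Real.norm_of_nonneg hρ.le]
    simp only [Tg, of_apply, Finset.mem_insert, Finset.mem_singleton]
    split_ifs <;> simp
  have hinj : Function.Injective fun j : Fin n => (k : ℤ) - j := fun a b h => by
    simp only [sub_right_inj, Nat.cast_inj] at h
    exact Fin.ext h
  calc ‖μ‖ ≤ _ := hk
    _ = _ := Finset.sum_congr rfl fun j _ => hentry j
    _ ≤ _ := Finset.sum_ite_mem_comp_le hinj _ fun m _ => (zpow_pos hρ m).le

theorem stmt_17_general (n r s : ℕ) (hr : 0 < r) (hs : 0 < s) :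
    ∀ lam : ℝ, 0 < lam → ((lam : ℂ) ∈ (Tg n r s).charpoly.roots) →
      lam ≤ ((r : ℝ) + s) /
        ((r : ℝ) ^ ((r : ℝ) / ((r : ℝ) + s)) * (s : ℝ) ^ ((s : ℝ) / ((r : ℝ) + s))) := by
  intro lam hlam hroot
  have hspec : (lam : ℂ) ∈ spectrum ℂ (Tg n r s) :=
    mem_spectrum_of_isRoot_charpoly (isRoot_of_mem_roots hroot)
  have hr' : (0 : ℝ) < r := Nat.cast_pos.mpr hr
  have hs' : (0 : ℝ) < s := Nat.cast_pos.mpr hs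
  have hbound := norm_le_sum_zpow_of_mem_spectrum_Tg hspec
    (rpow_pos_of_pos (div_pos hs' hr') (1 / ((r : ℝ) + s)))
  rw [Finset.sum_pair (by omega), Complex.norm_real, norm_of_nonneg hlam.le, ← rpow_intCast,
    ← rpow_intCast] at hbound
  push_cast at hbound
  rwa [rpow_add_rpow_neg_of_eq hr' hs' rfl] at hbound

theorem stmt_17 (n r s : ℕ) (hn : 0 < n) (hr : 0 < r) (hs : 0 < s) :
    ∀ lam : ℝ, 0 < lam → ((lam : ℂ) ∈ (Tg n r s).charpoly.roots) →
      lam ≤ ((r : ℝ) + s) /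
        ((r : ℝ) ^ ((r : ℝ) / ((r : ℝ) + s)) * (s : ℝ) ^ ((s : ℝ) / ((r : ℝ) + s))) :=
  stmt_17_general n r s hr hs
end

section
/- Let m be a positive integer and let B be the m×m real symmetric matrix with B_{1,1} = 1, B_{i,i} = 2 for 2 ≤ i ≤ m, B_{i,i+1} = B_{i+1,i} = 1 for 1 ≤ i ≤ m−1, and all other entries zero (the tridiagonal Toeplitz matrix tridiag(1, 2, 1) with its top-left entry changed from 2 to 1). Then the eigenvalues of B are exactly 2 + 2·cos(2jπ/(2m+1)) for j = 1, …, m. -/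
/-!
For `α = (j + 1)π / (2m + 1)` the vector `v i = sin ((2i + 1)α)` is an eigenvector with
eigenvalue `2 + 2 cos 2α`: extended to all of `ℤ`, it satisfies `v (-1) = -v 0` (which accounts
for the corner entry `1`) and `v m = 0`, so every row of `B v` is the stencil
`v (i-1) + 2 v i + v (i+1)`, and `sin (x - 2α) + sin (x + 2α) = 2 cos 2α sin x`. For `j < m`
these `m` eigenvalues are distinct since `cos` is injective on `[0, π]`, and the characteristic
polynomial has degree `m`.
-/

open Matrix Polynomial Real

theorem Matrix.isRoot_charpoly_of_mulVec_eq_smul {n R : Type*} [Fintype n] [DecidableEq n]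
    [CommRing R] [IsDomain R] {M : Matrix n n R} {v : n → R} {μ : R} (hv : v ≠ 0)
    (hMv : M *ᵥ v = μ • v) : M.charpoly.IsRoot μ := by
  rw [IsRoot, eval_charpoly, ← exists_mulVec_eq_zero_iff]
  refine ⟨v, hv, ?_⟩
  ext
  simp [sub_mulVec, hMv]

theorem Fin.sum_ite_intCast_eq {R : Type*} [AddCommMonoid R] (m : ℕ) (t : ℤ) (g : ℤ → R) :
    ∑ k : Fin m, (if (k : ℤ) = t then g k else 0) = if 0 ≤ t ∧ t < m then g t else 0 := by
  split_ifs with ht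
  · rw [Finset.sum_eq_single_of_mem ⟨t.toNat, by omega⟩ (Finset.mem_univ _)]
    · simp [Int.toNat_of_nonneg ht.1]
    · intro k _ hk
      rw [if_neg]
      exact fun h => hk (Fin.ext (by simp; omega))
  · exact Finset.sum_eq_zero fun k _ => if_neg (by omega)

section CornerTridiag

variable (R : Type*) [Ring R]

def cornerTridiag (m : ℕ) : Matrix (Fin m) (Fin m) R :=
  of fun i j => if i = j then (if (i : ℕ) = 0 then 1 else 2)
    else if (i : ℤ) - (j : ℤ) = 1 ∨ (j : ℤ) - (i : ℤ) = 1 then 1 else 0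

variable {R}

theorem cornerTridiag_mulVec (m : ℕ) (w : ℤ → R) (h_left : w (-1) = -w 0) (h_right : w m = 0)
    (i : Fin m) :
    (cornerTridiag R m *ᵥ fun k => w k) i = w (i - 1) + 2 * w i + w (i + 1) := by
  set c : R := if (i : ℕ) = 0 then 1 else 2
  have entry : ∀ k : Fin m, cornerTridiag R m i k * w k =
      (if (k : ℤ) = i then c * w k else 0) +
      (if (k : ℤ) = i - 1 then w k else 0) + (if (k : ℤ) = i + 1 then w k else 0) := by
    intro k
    simp only [cornerTridiag, of_apply, Fin.ext_iff, c]
    split_ifs <;> first | omega | simp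
  have diag_left : c * w i + (if 0 ≤ (i : ℤ) - 1 ∧ (i : ℤ) - 1 < m then w (i - 1) else 0) =
      w (i - 1) + 2 * w i := by
    rcases eq_or_ne (i : ℕ) 0 with h0 | h0
    · have hi0 : ((i : ℕ) : ℤ) = 0 := by exact_mod_cast h0
      rw [show c = 1 from if_pos h0, if_neg (by omega), hi0, zero_sub, h_left, two_mul]
      noncomm_ring
    · rw [show c = 2 from if_neg h0, if_pos (by omega)]
      noncomm_ring
  have right :
      (if 0 ≤ (i : ℤ) + 1 ∧ (i : ℤ) + 1 < m then w (i + 1) else 0) = w (i + 1) := by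
    split_ifs with h
    · rfl
    · rw [show (i : ℤ) + 1 = m by omega, h_right]
  simp only [mulVec, dotProduct, entry, Finset.sum_add_distrib, Fin.sum_ite_intCast_eq]
  rw [Fin.sum_ite_intCast_eq m _ fun t => c * w t, if_pos (by omega)]
  rw [diag_left, right]

end CornerTridiag

theorem Real.sin_sub_add_two_mul_sin_add_sin_add (x y : ℝ) :
    sin (x - y) + 2 * sin x + sin (x + y) = (2 + 2 * cos y) * sin x := by
  rw [sin_sub, sin_add]
  ring

theorem cornerTridiag_mulVec_sin {m : ℕ} {α : ℝ} (hα : sin ((2 * m + 1) * α) = 0) :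
    cornerTridiag ℝ m *ᵥ (fun i => sin ((2 * (i : ℕ) + 1) * α)) =
      (2 + 2 * cos (2 * α)) • fun i : Fin m => sin ((2 * (i : ℕ) + 1) * α) := by
  ext i
  have h := cornerTridiag_mulVec m (fun k : ℤ => sin ((2 * k + 1) * α))
    (by push_cast; rw [← sin_neg]; ring_nf) (by push_cast; exact hα) i
  push_cast at h
  rw [h, Pi.smul_apply, smul_eq_mul, ← sin_sub_add_two_mul_sin_add_sin_add]
  ring_nf

noncomputable def cornerTridiagEigenvalue (m j : ℕ) : ℝ :=
  2 + 2 * cos (2 * (j + 1) * π / (2 * m + 1))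

theorem isRoot_charpoly_cornerTridiag {m j : ℕ} (hj : j < m) :
    (cornerTridiag ℝ m).charpoly.IsRoot (cornerTridiagEigenvalue m j) := by
  set α : ℝ := (j + 1) * π / (2 * m + 1)
  have hm : (0 : ℝ) < 2 * m + 1 := by positivity
  have hα_pos : 0 < α := by positivity
  have hα_lt : α < π := by
    rw [div_lt_iff₀ hm]
    have hj' : (j : ℝ) + 1 ≤ m := by exact_mod_cast hj
    nlinarith [pi_pos]
  have hα : sin ((2 * m + 1) * α) = 0 := by
    rw [mul_div_cancel₀ _ hm.ne']
    exact_mod_cast sin_nat_mul_pi (j + 1)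
  have hv : (fun i : Fin m => sin ((2 * (i : ℕ) + 1) * α)) ≠ 0 := fun h => by
    have h0 := congrFun h ⟨0, by omega⟩
    simp only [Nat.cast_zero, mul_zero, zero_add, one_mul, Pi.zero_apply] at h0
    exact (sin_pos_of_pos_of_lt_pi hα_pos hα_lt).ne' h0
  convert isRoot_charpoly_of_mulVec_eq_smul hv (cornerTridiag_mulVec_sin hα) using 1
  rw [cornerTridiagEigenvalue, mul_assoc 2, mul_div_assoc 2]

theorem cornerTridiagEigenvalue_strictAntiOn (m : ℕ) :
    StrictAntiOn (cornerTridiagEigenvalue m) (Set.Iio m) := by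
  intro a _ b hb hab
  have hm : (0 : ℝ) < 2 * m + 1 := by positivity
  have hb' : (b : ℝ) + 1 ≤ m := by exact_mod_cast (hb : b < m)
  have hab' : (a : ℝ) < b := by exact_mod_cast hab
  unfold cornerTridiagEigenvalue
  gcongr 2 + 2 * ?_
  apply cos_lt_cos_of_nonneg_of_le_pi (by positivity)
  · rw [div_le_iff₀ hm]
    nlinarith [pi_pos]
  · gcongr

theorem stmt_18_general (m : ℕ) (B : Matrix (Fin m) (Fin m) ℝ)
    (hB : ∀ i j : Fin m, B i j =
      if i = j then (if (i : ℕ) = 0 then 1 else 2)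
      else if (i : ℤ) - (j : ℤ) = 1 ∨ (j : ℤ) - (i : ℤ) = 1 then 1 else 0) :
    B.charpoly.roots =
      (Finset.univ : Finset (Fin m)).val.map
        (fun j => 2 + 2 * Real.cos (2 * ((j : ℕ) + 1) * π / (2 * m + 1))) := by
  obtain rfl : B = cornerTridiag ℝ m := ext hB
  -- The right-hand side elaborates as a map over `univ.val` coerced into `Multiset ℕ`.
  have hinj : Set.InjOn (cornerTridiagEigenvalue m) (Finset.range m) := by
    simpa only [Finset.coe_range] using (cornerTridiagEigenvalue_strictAntiOn m).injOn
  have hroots := roots_eq_of_natDegree_le_card_of_ne_zero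
    (S := (Finset.range m).image (cornerTridiagEigenvalue m)) ?_ ?_
    (charpoly_monic (cornerTridiag ℝ m)).ne_zero
  · rw [hroots, Finset.image_val_of_injOn hinj, ← Nat.Iio_eq_range,
      ← Fin.map_valEmbedding_univ (n := m), Finset.map_val]
    exact congrArg _ (Multiset.bind_singleton _ _).symm
  · simp only [Finset.mem_image, Finset.mem_range, forall_exists_index, and_imp,
      forall_apply_eq_imp_iff₂]
    exact fun j hj => isRoot_charpoly_cornerTridiag hj
  · rw [charpoly_natDegree_eq_dim, Finset.card_image_of_injOn hinj]
    simp

theorem stmt_18 (m : ℕ) (hm : 0 < m) (B : Matrix (Fin m) (Fin m) ℝ)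
    (hB : ∀ i j : Fin m, B i j =
      if i = j then (if (i : ℕ) = 0 then 1 else 2)
      else if (i : ℤ) - (j : ℤ) = 1 ∨ (j : ℤ) - (i : ℤ) = 1 then 1 else 0) :
    B.charpoly.roots =
      (Finset.univ : Finset (Fin m)).val.map
        (fun j => 2 + 2 * Real.cos (2 * ((j : ℕ) + 1) * π / (2 * m + 1))) :=
  stmt_18_general m B hB
end
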